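/- arXiv:2510.25891 — 4 statements merged into one kernel-verified Lean document; each statement's English description precedes it below -/
import Mathlib

section
/- Let G be a finite group and let X and Y be finite G-sets. If for every subgroup H of G the number of H-fixed points of X equals the number of H-fixed points of Y, then X and Y are isomorphic as G-sets, i.e. there exists a G-equivariant bijection X → Y. -/
open MulAction

universe u v w

private lemma stab_key {G : Type u} [Group G] {X : Type v} {Y : Type w}
    [MulAction G X] [MulAction G Y] {x : X} {y : Y}
    (hxy : stabilizer G x = stabilizer G y) {g₁ g₂ : G}
    (hg : g₁ • x = g₂ • x) : g₁ • y = g₂ • y := by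
  have hm : g₂⁻¹ * g₁ ∈ stabilizer G x := by
    rw [mem_stabilizer_iff, mul_smul, hg, inv_smul_smul]
  rw [hxy, mem_stabilizer_iff, mul_smul] at hm
  calc g₁ • y = g₂ • (g₂⁻¹ • (g₁ • y)) := (smul_inv_smul _ _).symm
  _ = g₂ • y := by rw [hm]

private lemma fixedPoints_bot_eq' {G : Type u} [Group G] (Z : Type v) [MulAction G Z] :
    fixedPoints (⊥ : Subgroup G) Z = Set.univ := by
  ext z
  simp only [Set.mem_univ, iff_true, mem_fixedPoints]
  rintro ⟨m, hm⟩
  obtain rfl := Subgroup.mem_bot.mp hm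
  show (1 : G) • z = z
  exact one_smul _ z

private lemma mem_fixed_iff_le_stab {G : Type u} [Group G] {Z : Type v} [MulAction G Z]
    (H : Subgroup G) (z : Z) : z ∈ fixedPoints H Z ↔ H ≤ stabilizer G z := by
  rw [mem_fixedPoints]
  constructor
  · intro hz g hg
    exact hz ⟨g, hg⟩
  · intro hle m
    exact hle m.2

private lemma exists_partner {G : Type u} [Group G] {X : Type v} {Y : Type w}
    [Finite X] [Finite Y] [MulAction G X] [MulAction G Y] {H : Subgroup G}
    (x : X) (hx : stabilizer G x = H)
    (hcard : Nat.card (fixedPoints H X) = Nat.card (fixedPoints H Y))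
    (hmax : ∀ y : Y, H ≤ stabilizer G y → stabilizer G y = H) :
    ∃ y : Y, stabilizer G y = H := by
  have hne : (fixedPoints H X).Nonempty := ⟨x, (mem_fixed_iff_le_stab H x).mpr hx.ge⟩
  haveI := hne.to_subtype
  have hpos : 0 < Nat.card (fixedPoints H Y) := hcard ▸ Nat.card_pos
  obtain ⟨⟨y, hy⟩⟩ := (Nat.card_pos_iff.mp hpos).1
  exact ⟨y, hmax y ((mem_fixed_iff_le_stab H y).mp hy)⟩

private def subAction {G : Type u} [Group G] {X : Type v} [MulAction G X] (p : X → Prop)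
    (hp : ∀ (g : G) (z : X), p z → p (g • z)) : MulAction G {z : X // p z} where
  smul g z := ⟨g • z.1, hp g z.1 z.2⟩
  one_smul z := Subtype.ext (one_smul G z.1)
  mul_smul g₁ g₂ z := Subtype.ext (mul_smul g₁ g₂ z.1)

/-- fixed points of the sub-action, as a subtype of fixed points. -/
private def fixedSubEquiv {G : Type u} [Group G] {X : Type v} [MulAction G X] (p : X → Prop)
    (hp : ∀ (g : G) (z : X), p z → p (g • z)) (H' : Subgroup G) :
    letI := subAction p hp
    (fixedPoints H' {z : X // p z} ≃ {a : fixedPoints H' X // p a.1}) :=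
  letI := subAction p hp
  { toFun := fun z => ⟨⟨z.1.1, fun m => congrArg Subtype.val (z.2 m)⟩, z.1.2⟩
    invFun := fun a => ⟨⟨a.1.1, a.2⟩, fun m => Subtype.ext (a.1.2 m)⟩
    left_inv := fun z => rfl
    right_inv := fun a => rfl }

/-- reshuffle: fixed points lying in a subset, two ways. -/
private def fixedReshuffle {G : Type u} [Group G] {X : Type v} [MulAction G X] (q : X → Prop)
    (H' : Subgroup G) :
    {a : fixedPoints H' X // q a.1} ≃ {z : {z : X // q z} // ∀ m : H', m • z.1 = z.1} where
  toFun a := ⟨⟨a.1.1, a.2⟩, fun m => a.1.2 m⟩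
  invFun b := ⟨⟨b.1.1, b.2⟩, b.1.2⟩
  left_inv a := rfl
  right_inv b := rfl

private theorem aux (G : Type u) [Group G] [Fintype G] :
    ∀ (n : ℕ) (X : Type v) (Y : Type w) [Fintype X] [Fintype Y]
      [MulAction G X] [MulAction G Y],
      Fintype.card X = n →
      (∀ H : Subgroup G,
        Nat.card (fixedPoints H X) = Nat.card (fixedPoints H Y)) →
      ∃ e : X ≃ Y, ∀ (g : G) (x : X), e (g • x) = g • e x := by
  intro n
  induction n using Nat.strong_induction_on with
  | _ n ih =>
    intro X Y _ _ _ _ hcard h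
    classical
    rcases isEmpty_or_nonempty X with hX | hX
    · have h0 := h ⊥
      rw [fixedPoints_bot_eq', fixedPoints_bot_eq', Nat.card_univ, Nat.card_univ] at h0
      haveI : IsEmpty Y := by
        have : Fintype.card Y = 0 := by
          rw [← Nat.card_eq_fintype_card, ← h0, Nat.card_eq_fintype_card,
            Fintype.card_eq_zero]
        exact Fintype.card_eq_zero_iff.mp this
      exact ⟨Equiv.equivOfIsEmpty X Y, fun g x => isEmptyElim x⟩
    · obtain ⟨x0⟩ := hX
      set S : Set (Subgroup G) :=
        {H | (∃ x : X, stabilizer G x = H) ∨ (∃ y : Y, stabilizer G y = H)} with hS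
      obtain ⟨H, hHS, hmax⟩ :=
        Set.Finite.exists_maximalFor id S (Set.toFinite S) ⟨_, Or.inl ⟨x0, rfl⟩⟩
      have hmaxX : ∀ x : X, H ≤ stabilizer G x → stabilizer G x = H :=
        fun x hle => le_antisymm (hmax (Or.inl ⟨x, rfl⟩) hle) hle
      have hmaxY : ∀ y : Y, H ≤ stabilizer G y → stabilizer G y = H :=
        fun y hle => le_antisymm (hmax (Or.inr ⟨y, rfl⟩) hle) hle
      have hpair : ∃ (x : X) (y : Y), stabilizer G x = H ∧ stabilizer G y = H := by
        rcases hHS with ⟨x, hx⟩ | ⟨y, hy⟩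
        · obtain ⟨y, hy⟩ := exists_partner x hx (h H) hmaxY
          exact ⟨x, y, hx, hy⟩
        · obtain ⟨x, hx⟩ := exists_partner y hy (h H).symm hmaxX
          exact ⟨x, y, hx, hy⟩
      obtain ⟨x, y, hx, hy⟩ := hpair
      have Heq : stabilizer G x = stabilizer G y := hx.trans hy.symm
      -- the equivariant orbit equivalence
      choose gx hgx using fun z : {z : X // z ∈ orbit G x} => mem_orbit_iff.mp z.2
      choose gy hgy using fun w : {w : Y // w ∈ orbit G y} => mem_orbit_iff.mp w.2
      have f0spec : ∀ (z : {z : X // z ∈ orbit G x}) (g : G), g • x = z.1 →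
          gx z • y = g • y := fun z g hg => stab_key Heq ((hgx z).trans hg.symm)
      have f1spec : ∀ (w : {w : Y // w ∈ orbit G y}) (g : G), g • y = w.1 →
          gy w • x = g • x := fun w g hg => stab_key Heq.symm ((hgy w).trans hg.symm)
      set Φ : {z : X // z ∈ orbit G x} ≃ {w : Y // w ∈ orbit G y} :=
        { toFun := fun z => ⟨gx z • y, mem_orbit y (gx z)⟩
          invFun := fun w => ⟨gy w • x, mem_orbit x (gy w)⟩
          left_inv := by
            intro z
            apply Subtype.ext
            show gy ⟨gx z • y, _⟩ • x = z.1
            rw [f1spec ⟨gx z • y, mem_orbit y (gx z)⟩ (gx z) rfl]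
            exact hgx z
          right_inv := by
            intro w
            apply Subtype.ext
            show gx ⟨gy w • x, _⟩ • y = w.1
            rw [f0spec ⟨gy w • x, mem_orbit x (gy w)⟩ (gy w) rfl]
            exact hgy w } with hΦ
      have Φval : ∀ z : {z : X // z ∈ orbit G x}, (Φ z).1 = gx z • y := fun z => rfl
      have Φequiv : ∀ (g : G) (z : {z : X // z ∈ orbit G x}) (hz : g • z.1 ∈ orbit G x),
          (Φ ⟨g • z.1, hz⟩).1 = g • (Φ z).1 := by
        intro g z hz
        rw [Φval, Φval, f0spec ⟨g • z.1, hz⟩ (g * gx z) (by rw [mul_smul, hgx z]), mul_smul]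
      -- orbit invariance
      have smul_mem_iff : ∀ (g : G) (z : X), g • z ∈ orbit G x ↔ z ∈ orbit G x := by
        intro g z
        rw [mem_orbit_symm, orbit_smul, mem_orbit_symm]
      have smul_mem_iffY : ∀ (g : G) (w : Y), g • w ∈ orbit G y ↔ w ∈ orbit G y := by
        intro g w
        rw [mem_orbit_symm, orbit_smul, mem_orbit_symm]
      -- complement actions
      have hpX : ∀ (g : G) (z : X), ¬ z ∈ orbit G x → ¬ g • z ∈ orbit G x :=
        fun g z hz hm => hz ((smul_mem_iff g z).mp hm)
      have hpY : ∀ (g : G) (w : Y), ¬ w ∈ orbit G y → ¬ g • w ∈ orbit G y :=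
        fun g w hw hm => hw ((smul_mem_iffY g w).mp hm)
      letI MX : MulAction G {z : X // ¬ z ∈ orbit G x} := subAction _ hpX
      letI MY : MulAction G {w : Y // ¬ w ∈ orbit G y} := subAction _ hpY
      -- fixed point counts of complements
      have hcount : ∀ H' : Subgroup G,
          Nat.card (fixedPoints H' {z : X // ¬ z ∈ orbit G x}) =
          Nat.card (fixedPoints H' {w : Y // ¬ w ∈ orbit G y}) := by
        intro H'
        have hiff : ∀ z : {z : X // z ∈ orbit G x},
            (∀ m : H', m • z.1 = z.1) ↔ (∀ m : H', m • (Φ z).1 = (Φ z).1) := by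
          intro z
          constructor
          · intro hz m
            have h1 : ((m : G) * gx z) • x = gx z • x := by
              rw [mul_smul, hgx z]; exact hz m
            have h2 := stab_key Heq h1
            rw [Φval]
            show (m : G) • (gx z • y) = gx z • y
            rw [← mul_smul]; exact h2
          · intro hΦz m
            have h1 : ((m : G) * gx z) • y = gx z • y := by
              rw [mul_smul]
              have := hΦz m
              rw [Φval] at this
              exact this
            have h2 := stab_key Heq.symm h1
            rw [mul_smul, hgx z] at h2
            exact h2
        have Eorb : {z : {z : X // z ∈ orbit G x} // ∀ m : H', m • z.1 = z.1} ≃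
            {w : {w : Y // w ∈ orbit G y} // ∀ m : H', m • w.1 = w.1} :=
          Equiv.subtypeEquiv Φ hiff
        have cardX : Nat.card (fixedPoints H' X) =
            Nat.card {z : {z : X // z ∈ orbit G x} // ∀ m : H', m • z.1 = z.1} +
            Nat.card (fixedPoints H' {z : X // ¬ z ∈ orbit G x}) := by
          rw [Nat.card_congr ((Equiv.sumCompl
            (fun a : fixedPoints H' X => (a : X) ∈ orbit G x)).symm), Nat.card_sum]
          congr 1
          · exact Nat.card_congr (fixedReshuffle _ H')
          · exact Nat.card_congr (fixedSubEquiv _ hpX H').symm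
        have cardY : Nat.card (fixedPoints H' Y) =
            Nat.card {w : {w : Y // w ∈ orbit G y} // ∀ m : H', m • w.1 = w.1} +
            Nat.card (fixedPoints H' {w : Y // ¬ w ∈ orbit G y}) := by
          rw [Nat.card_congr ((Equiv.sumCompl
            (fun a : fixedPoints H' Y => (a : Y) ∈ orbit G y)).symm), Nat.card_sum]
          congr 1
          · exact Nat.card_congr (fixedReshuffle _ H')
          · exact Nat.card_congr (fixedSubEquiv _ hpY H').symm
        have hO := Nat.card_congr Eorb
        have hH := h H'
        omega
      have hlt : Fintype.card {z : X // ¬ z ∈ orbit G x} < n :=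
        hcard ▸ Fintype.card_subtype_lt (x := x) (not_not_intro (mem_orbit_self x))
      obtain ⟨e', he'⟩ := ih _ hlt {z : X // ¬ z ∈ orbit G x} {w : Y // ¬ w ∈ orbit G y}
        rfl hcount
      refine ⟨(Equiv.sumCompl fun z : X => z ∈ orbit G x).symm.trans
        ((Equiv.sumCongr Φ e').trans (Equiv.sumCompl fun w : Y => w ∈ orbit G y)), ?_⟩
      intro g z
      by_cases hz : z ∈ orbit G x
      · have hgz : g • z ∈ orbit G x := (smul_mem_iff g z).mpr hz
        simp only [Equiv.trans_apply, Equiv.sumCompl_symm_apply_of_pos hgz,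
          Equiv.sumCompl_symm_apply_of_pos hz, Equiv.sumCongr_apply, Sum.map_inl,
          Equiv.sumCompl_apply_inl]
        exact Φequiv g ⟨z, hz⟩ hgz
      · have hgz : ¬ g • z ∈ orbit G x := hpX g z hz
        simp only [Equiv.trans_apply, Equiv.sumCompl_symm_apply_of_neg hgz,
          Equiv.sumCompl_symm_apply_of_neg hz, Equiv.sumCongr_apply, Sum.map_inr,
          Equiv.sumCompl_apply_inr]
        exact congrArg Subtype.val (he' g ⟨z, hz⟩)

/-- If two finite `G`-sets have the same number of `H`-fixed points for every
subgroup `H` of `G`, then they are isomorphic as `G`-sets, i.e. there is a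
`G`-equivariant bijection between them. -/
theorem stmt3 (G X Y : Type*) [Group G] [Fintype G] [Fintype X] [Fintype Y]
    [MulAction G X] [MulAction G Y]
    (h : ∀ H : Subgroup G,
      Nat.card (MulAction.fixedPoints H X) = Nat.card (MulAction.fixedPoints H Y)) :
    ∃ e : X ≃ Y, ∀ (g : G) (x : X), e (g • x) = g • e x :=
  aux G (Fintype.card X) X Y rfl h
end

section
/- Let n be a natural number and let A be a subring of the product ring ∏_{i : Fin n} ℤ. Then the inclusion A ↪ ∏_{i : Fin n} ℤ is an integral ring extension; that is, every element of ∏_{i : Fin n} ℤ is integral over A. -/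
/-- Any subring `A` of a finite product `∏_{i : Fin n} ℤ` of copies of `ℤ` is
integrally embedded: every element of the product ring is integral over `A`. -/
theorem stmt4 (n : ℕ) (A : Subring (Fin n → ℤ)) (x : Fin n → ℤ) :
    IsIntegral A x :=
  -- `Fin n → ℤ` is a finite `ℤ`-module, and `ℤ` maps into every subring.
  (Algebra.IsIntegral.isIntegral (R := ℤ) x).tower_top
end

section
/- Let n be a natural number and let A be a subring of the product ring ∏_{i : Fin n} ℤ. Then for every prime ideal 𝔭 of A there exist an index i : Fin n and a prime ideal 𝔮 of ℤ such that 𝔭 is the preimage of 𝔮 under the ring homomorphism A → ℤ obtained by restricting the i-th projection to A; equivalently, 𝔭 = ker(A → ℤ → ℤ/𝔮) where the first map is the restricted i-th projection. -/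
/-!
The coordinate projections `A → ℤ` are jointly injective, and each is surjective because `A`
contains the constants. A prime `𝔭` contains the product of their kernels, which is zero, so it
contains one kernel `ker πᵢ`; as `πᵢ` is surjective, `𝔭` is then the preimage of the prime `πᵢ(𝔭)`.
-/

open RingHom

theorem Ideal.IsPrime.exists_ker_le_of_iInf_ker_eq_bot {R ι : Type*} [CommRing R] [Finite ι]
    {S : ι → Type*} [∀ i, Semiring (S i)] (f : ∀ i, R →+* S i)
    (hf : ⨅ i, ker (f i) = ⊥) {P : Ideal R} (hP : P.IsPrime) : ∃ i, ker (f i) ≤ P := by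
  have := Fintype.ofFinite ι
  have hle : Finset.univ.inf (fun i => ker (f i)) ≤ P := by
    rw [Finset.inf_univ_eq_iInf, hf]
    exact bot_le
  obtain ⟨i, -, hi⟩ := hP.inf_le'.mp hle
  exact ⟨i, hi⟩

theorem Ideal.exists_isPrime_comap_eq_of_surjective {R S : Type*} [CommRing R] [CommRing S]
    {f : R →+* S} (hf : Function.Surjective f) {P : Ideal R} [P.IsPrime] (hker : ker f ≤ P) :
    ∃ Q : Ideal S, Q.IsPrime ∧ P = Q.comap f :=
  ⟨P.map f, Ideal.map_isPrime_of_surjective hf hker, by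
    rw [Ideal.comap_map_of_surjective' f hf, sup_eq_left.mpr hker]⟩

namespace Subring

theorem iInf_ker_evalRingHom_comp_subtype {ι : Type*} {R : ι → Type*} [∀ i, Ring (R i)]
    (A : Subring (∀ i, R i)) : ⨅ i, ker ((Pi.evalRingHom R i).comp A.subtype) = ⊥ := by
  refine eq_bot_iff.mpr fun x hx => Subtype.ext <| funext fun i => ?_
  exact (Ideal.mem_iInf.mp hx i : _)

theorem surjective_evalRingHom_comp_subtype {ι : Type*} (A : Subring (ι → ℤ)) (i : ι) :
    Function.Surjective ((Pi.evalRingHom (fun _ : ι => ℤ) i).comp A.subtype) :=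
  fun z => ⟨⟨z, intCast_mem A z⟩, rfl⟩

end Subring

/-- Dress's description of the prime spectrum, abstracted to an arbitrary subring `A`
of a finite product of copies of `ℤ`: every prime ideal of `A` is the preimage of a
prime ideal of `ℤ` under one of the coordinate projections restricted to `A`. -/
theorem stmt5 (n : ℕ) (A : Subring (Fin n → ℤ)) (𝔭 : Ideal A) [𝔭.IsPrime] :
    ∃ (i : Fin n) (𝔮 : Ideal ℤ), 𝔮.IsPrime ∧
      𝔭 = Ideal.comap ((Pi.evalRingHom (fun _ : Fin n => ℤ) i).comp A.subtype) 𝔮 := by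
  obtain ⟨i, hker⟩ := Ideal.IsPrime.exists_ker_le_of_iInf_ker_eq_bot _
    A.iInf_ker_evalRingHom_comp_subtype ‹𝔭.IsPrime›
  exact ⟨i, Ideal.exists_isPrime_comap_eq_of_surjective
    (A.surjective_evalRingHom_comp_subtype i) hker⟩
end

section
/- Let m, k be natural numbers and let A be a subring of the product ring ∏_{i : Fin m} ℤ. Suppose n ∈ A is an element such that for every index i there exists a natural number d_i ≥ 1 with n_i = k^{d_i} (the i-th component of n is a positive power of k). Then the image of the element (k, k, …, k) ∈ A in the localization of A away from n is a unit. -/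
/-!
The `i`-th component of `n - k ^ dᵢ` vanishes, so `∏ᵢ (n - k ^ dᵢ) = 0` in `A`. Reducing modulo `k`
turns this into `n ^ m ≡ 0`, i.e. `k` divides a power of `n`, and is therefore a unit away from `n`.
-/

theorem dvd_pow_card_of_prod_sub_eq_zero {R ι : Type*} [CommRing R] {s : Finset ι} {a c : R}
    {b : ι → R} (hb : ∀ i ∈ s, c ∣ b i) (h : ∏ i ∈ s, (a - b i) = 0) : c ∣ a ^ s.card := by
  rw [← Ideal.mem_span_singleton, ← Ideal.Quotient.eq_zero_iff_mem]
  set π := Ideal.Quotient.mk (Ideal.span {c})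
  have hπb : ∀ i ∈ s, π (b i) = 0 := fun i hi =>
    Ideal.Quotient.eq_zero_iff_mem.mpr (Ideal.mem_span_singleton.mpr (hb i hi))
  calc π (a ^ s.card) = ∏ i ∈ s, π (a - b i) := by
        rw [map_pow, ← Finset.prod_const]
        exact Finset.prod_congr rfl fun i hi => by rw [map_sub, hπb i hi, sub_zero]
    _ = 0 := by rw [← map_prod, h, map_zero]

theorem Subring.prod_sub_eq_zero_of_apply_eq {ι R : Type*} [Fintype ι] [CommRing R]
    {A : Subring (ι → R)} (x : A) (y : ι → A) (h : ∀ i, (x : ι → R) i = (y i : ι → R) i) :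
    ∏ i, (x - y i) = 0 := by
  apply A.subtype_injective
  rw [map_prod, map_zero]
  funext j
  rw [Finset.prod_apply]
  exact Finset.prod_eq_zero (Finset.mem_univ j) (by simp [h j])

/-- Let `A` be a subring of `∏_{i : Fin m} ℤ` and let `n ∈ A` be an element each of
whose components is a positive power of `k`. Then the constant tuple `(k, …, k)`
becomes a unit in the localization of `A` away from `n`. -/
theorem stmt7 (m k : ℕ) (A : Subring (Fin m → ℤ)) (n : A)
    (h : ∀ i : Fin m, ∃ d : ℕ, 1 ≤ d ∧ (n : Fin m → ℤ) i = (k : ℤ) ^ d) :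
    IsUnit (algebraMap A (Localization.Away n) (k : A)) := by
  choose d hd_pos hd using h
  have hprod : ∏ i, (n - (k : A) ^ d i) = 0 :=
    Subring.prod_sub_eq_zero_of_apply_eq n _ fun i => by simp [hd i]
  have hdvd : (k : A) ∣ n ^ (Finset.univ : Finset (Fin m)).card :=
    dvd_pow_card_of_prod_sub_eq_zero
      (fun i _ => dvd_pow_self _ (Nat.one_le_iff_ne_zero.mp (hd_pos i))) hprod
  exact (IsLocalization.Away.algebraMap_isUnit_iff n).mpr ⟨_, hdvd⟩
end
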